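/- Let r ≥ 1 and s ≥ 0 be integers, let z_1, …, z_r ∈ ℝ, and let Σ be the 2r(s+1) × 2r(s+1) real symmetric matrix indexed by triples (T, i, a) with T ∈ {W, Z}, i ∈ {1,…,r}, a ∈ {0,…,s}, with entries Σ_{(W,i,a),(W,i',b)} = Σ_{(Z,i,a),(Z,i',b)} = ((−1)^b/2) ∫_0^1 θ^{a+b} Cos^{(a+b)}((z_i − z_{i'})θ) dθ, Σ_{(W,i,a),(Z,i',b)} = ((−1)^b/2) ∫_0^1 θ^{a+b} Sin^{(a+b)}((z_i − z_{i'})θ) dθ, and Σ_{(Z,i,a),(W,i',b)} = ((−1)^a/2) ∫_0^1 θ^{a+b} Sin^{(a+b)}((z_{i'} − z_i)θ) dθ. Then for every real vector v = (x, y) with components x_{i,a} (in the W-coordinates) and y_{i,a} (in the Z-coordinates), vᵀ Σ v = (1/2) ∫_0^1 |F_v(θ)|² dθ, where F_v(θ) = ∑_{i=1}^r ∑_{a=0}^s (x_{i,a} + i·y_{i,a}) (iθ)^a e^{i z_i θ} (a complex-valued function of θ, with i the imaginary unit). -/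

import Mathlib

/-! With `c_W = 1`, `c_Z = i` put `e_{T,i,a}(θ) = c_T (iθ)^a e^{i z_i θ}`. Then
`e_p ē_q = c_T c̄_{T'} (-1)^b θ^{a+b} i^{a+b} e^{i (z_i - z_j) θ}`, and the real and imaginary parts
of `i^n e^{ix}` are the `n`-th derivatives of `cos` and `sin` at `x`. Hence `Σ` is the Gram matrix
of the `e_p` for the real inner product `(f, g) ↦ (1/2) ∫₀¹ Re (f ḡ)`, so
`vᵀ Σ v = (1/2) ∫₀¹ |∑ v_p e_p|²`, and `∑ v_p e_p = F_v`. -/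

open MeasureTheory Real

/-- Covariance entry of the limiting stationary Gaussian process `(W,Z)`:
`false` stands for `W` and `true` for `Z`. -/
noncomputable def limCov (zi zj : ℝ) (T T' : Bool) (a b : ℕ) : ℝ :=
  match T, T' with
  | false, false =>
      ((-1 : ℝ) ^ b / 2) * ∫ θ in (0:ℝ)..1, θ ^ (a + b) * iteratedDeriv (a + b) Real.cos ((zi - zj) * θ)
  | true, true =>
      ((-1 : ℝ) ^ b / 2) * ∫ θ in (0:ℝ)..1, θ ^ (a + b) * iteratedDeriv (a + b) Real.cos ((zi - zj) * θ)
  | false, true =>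
      ((-1 : ℝ) ^ b / 2) * ∫ θ in (0:ℝ)..1, θ ^ (a + b) * iteratedDeriv (a + b) Real.sin ((zi - zj) * θ)
  | true, false =>
      ((-1 : ℝ) ^ a / 2) * ∫ θ in (0:ℝ)..1, θ ^ (a + b) * iteratedDeriv (a + b) Real.sin ((zj - zi) * θ)

open ComplexConjugate

theorem iteratedDeriv_cos_sin_eq_re_im (n : ℕ) (x : ℝ) :
    iteratedDeriv n Real.cos x = (Complex.I ^ n * Complex.exp (x * Complex.I)).re ∧
      iteratedDeriv n Real.sin x = (Complex.I ^ n * Complex.exp (x * Complex.I)).im := by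
  induction n with
  | zero => simp [Complex.exp_ofReal_mul_I_re, Complex.exp_ofReal_mul_I_im]
  | succ n ih =>
    rw [Real.iteratedDeriv_add_one_cos, Real.iteratedDeriv_add_one_sin, Pi.neg_apply, pow_succ',
      mul_assoc, Complex.I_mul_re, Complex.I_mul_im, ih.1, ih.2]
    exact ⟨rfl, rfl⟩

theorem limCov_true_false (zi zj : ℝ) (a b : ℕ) :
    limCov zi zj true false a b = limCov zj zi false true b a := by
  simp only [limCov, Nat.add_comm a b]

theorem norm_sum_sq_eq_sum_sum_re_mul_conj {ι : Type*} (s : Finset ι) (w : ι → ℂ) :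
    ‖∑ i ∈ s, w i‖ ^ 2 = ∑ i ∈ s, ∑ j ∈ s, (w i * conj (w j)).re := by
  rw [← Complex.ofReal_re (‖_‖ ^ 2), Complex.ofReal_pow, ← Complex.mul_conj', map_sum,
    Finset.sum_mul_sum]
  simp only [Complex.re_sum]

noncomputable def limCovFeature (zi : ℝ) (T : Bool) (a : ℕ) (θ : ℝ) : ℂ :=
  (if T then Complex.I else 1) * (Complex.I * θ) ^ a * Complex.exp (Complex.I * zi * θ)

@[fun_prop]
theorem continuous_limCovFeature (zi : ℝ) (T : Bool) (a : ℕ) :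
    Continuous (limCovFeature zi T a) := by
  unfold limCovFeature; fun_prop

theorem limCovFeature_mul_conj (zi zj : ℝ) (T T' : Bool) (a b : ℕ) (θ : ℝ) :
    limCovFeature zi T a θ * conj (limCovFeature zj T' b θ) =
      (if T then Complex.I else 1) * conj (if T' then Complex.I else 1) *
        ((((-1) ^ b * θ ^ (a + b) : ℝ) : ℂ) *
          (Complex.I ^ (a + b) * Complex.exp (((zi - zj) * θ : ℝ) * Complex.I))) := by
  have hexp : Complex.exp (Complex.I * zi * θ) * conj (Complex.exp (Complex.I * zj * θ)) =
      Complex.exp (((zi - zj) * θ : ℝ) * Complex.I) := by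
    rw [← Complex.exp_conj, ← Complex.exp_add]
    congr 1
    simp only [map_mul, Complex.conj_I, Complex.conj_ofReal]
    push_cast
    ring
  simp only [limCovFeature, map_mul, map_pow, Complex.conj_I, Complex.conj_ofReal]
  rw [← hexp]
  push_cast
  ring

theorem limCov_eq_integral_of_not_true_false (zi zj : ℝ) (T T' : Bool) (a b : ℕ)
    (h : ¬(T = true ∧ T' = false)) :
    limCov zi zj T T' a b =
      (1 / 2) * ∫ θ in (0:ℝ)..1, (limCovFeature zi T a θ * conj (limCovFeature zj T' b θ)).re := by
  simp only [← intervalIntegral.integral_const_mul, limCovFeature_mul_conj]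
  cases T <;> cases T' <;> simp only [limCov] <;> try simp at h
  all_goals
    rw [← intervalIntegral.integral_const_mul]
    congr 1 with θ
    simp only [(iteratedDeriv_cos_sin_eq_re_im _ _).1, (iteratedDeriv_cos_sin_eq_re_im _ _).2,
      Bool.false_eq_true, ite_true, ite_false, map_one, Complex.conj_I, one_mul, mul_one, mul_neg,
      Complex.I_mul_I, neg_neg, neg_mul, Complex.neg_re, Complex.I_mul_re, Complex.re_ofReal_mul,
      Complex.im_ofReal_mul]
    ring

theorem limCov_eq_integral (zi zj : ℝ) (T T' : Bool) (a b : ℕ) :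
    limCov zi zj T T' a b =
      (1 / 2) * ∫ θ in (0:ℝ)..1, (limCovFeature zi T a θ * conj (limCovFeature zj T' b θ)).re := by
  cases T <;> cases T'
  case true.false =>
    rw [limCov_true_false, limCov_eq_integral_of_not_true_false zj zi false true b a (by simp)]
    congr 2 with θ
    rw [← Complex.conj_re, map_mul, Complex.conj_conj, mul_comm]
  all_goals
    rw [limCov_eq_integral_of_not_true_false _ _ _ _ _ _ (by simp)]

theorem norm_sum_ofReal_mul_sq {ι : Type*} (s : Finset ι) (x : ι → ℝ) (w : ι → ℂ) :
    ‖∑ i ∈ s, (x i : ℂ) * w i‖ ^ 2 = ∑ i ∈ s, ∑ j ∈ s, x i * x j * (w i * conj (w j)).re := by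
  rw [norm_sum_sq_eq_sum_sum_re_mul_conj]
  refine Finset.sum_congr rfl fun i _ => Finset.sum_congr rfl fun j _ => ?_
  rw [map_mul, Complex.conj_ofReal, mul_mul_mul_comm, ← Complex.ofReal_mul, Complex.re_ofReal_mul]

theorem sum_sum_mul_limCov_mul {κ : Type*} [Fintype κ] (ζ : κ → ℝ) (T : κ → Bool) (a : κ → ℕ)
    (v : κ → ℝ) :
    ∑ p, ∑ q, v p * limCov (ζ p) (ζ q) (T p) (T q) (a p) (a q) * v q =
      (1 / 2) * ∫ θ in (0:ℝ)..1, ‖∑ p, (v p : ℂ) * limCovFeature (ζ p) (T p) (a p) θ‖ ^ 2 := by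
  have hcont : ∀ p q, Continuous fun θ => v p * v q * (limCovFeature (ζ p) (T p) (a p) θ *
      conj (limCovFeature (ζ q) (T q) (a q) θ)).re := fun p q => by
    fun_prop
  simp_rw [norm_sum_ofReal_mul_sq]
  rw [intervalIntegral.integral_finsetSum fun p _ =>
    (continuous_finsetSum _ fun q _ => hcont p q).intervalIntegrable 0 1, Finset.mul_sum]
  refine Finset.sum_congr rfl fun p _ => ?_
  rw [intervalIntegral.integral_finsetSum fun q _ => (hcont p q).intervalIntegrable 0 1,
    Finset.mul_sum]
  refine Finset.sum_congr rfl fun q _ => ?_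
  rw [intervalIntegral.integral_const_mul, limCov_eq_integral]
  ring

theorem statement14_general (r s : ℕ) (z : Fin r → ℝ)
    (v : Bool × Fin r × Fin (s + 1) → ℝ) :
    ∑ p : Bool × Fin r × Fin (s + 1), ∑ q : Bool × Fin r × Fin (s + 1),
        v p * limCov (z p.2.1) (z q.2.1) p.1 q.1 (p.2.2 : ℕ) (q.2.2 : ℕ) * v q
      = (1 / 2) * ∫ θ in (0:ℝ)..1,
          ‖∑ i : Fin r, ∑ a : Fin (s + 1),
            ((v (false, i, a) : ℂ) + (v (true, i, a) : ℂ) * Complex.I) *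
              (Complex.I * (θ : ℂ)) ^ (a : ℕ) *
              Complex.exp (Complex.I * (z i : ℂ) * (θ : ℂ))‖ ^ 2 := by
  have hF : ∀ θ : ℝ, (∑ i : Fin r, ∑ a : Fin (s + 1),
      ((v (false, i, a) : ℂ) + (v (true, i, a) : ℂ) * Complex.I) *
        (Complex.I * (θ : ℂ)) ^ (a : ℕ) * Complex.exp (Complex.I * (z i : ℂ) * (θ : ℂ))) =
      ∑ p : Bool × Fin r × Fin (s + 1), (v p : ℂ) * limCovFeature (z p.2.1) p.1 p.2.2 θ := by
    intro θ
    simp only [Fintype.sum_prod_type, Fintype.sum_bool, ← Finset.sum_add_distrib]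
    refine Finset.sum_congr rfl fun i _ => Finset.sum_congr rfl fun a _ => ?_
    simp only [limCovFeature, ite_true, Bool.false_eq_true, ite_false]
    ring
  simp_rw [hF]
  exact (sum_sum_mul_limCov_mul (fun p => z p.2.1) Prod.fst
    (fun p : Bool × Fin r × Fin (s + 1) => (p.2.2 : ℕ)) v :)

/-- Integral form of the quadratic form of the limiting covariance matrix: for every
real vector `v` with `W`-components `x_{i,a} = v (false,i,a)` and `Z`-components
`y_{i,a} = v (true,i,a)`,
`vᵀ Σ v = (1/2) ∫₀¹ |F_v(θ)|² dθ` where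
`F_v(θ) = ∑_{i,a} (x_{i,a} + i y_{i,a}) (iθ)^a e^{i z_i θ}`. -/
theorem statement14 (r s : ℕ) (hr : 1 ≤ r) (z : Fin r → ℝ)
    (v : Bool × Fin r × Fin (s + 1) → ℝ) :
    ∑ p : Bool × Fin r × Fin (s + 1), ∑ q : Bool × Fin r × Fin (s + 1),
        v p * limCov (z p.2.1) (z q.2.1) p.1 q.1 (p.2.2 : ℕ) (q.2.2 : ℕ) * v q
      = (1 / 2) * ∫ θ in (0:ℝ)..1,
          ‖∑ i : Fin r, ∑ a : Fin (s + 1),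
            ((v (false, i, a) : ℂ) + (v (true, i, a) : ℂ) * Complex.I) *
              (Complex.I * (θ : ℂ)) ^ (a : ℕ) *
              Complex.exp (Complex.I * (z i : ℂ) * (θ : ℂ))‖ ^ 2 :=
  statement14_general r s z v
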